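/- Let {ψ(θ,S), θ,S ∈ T_0} be a biadmissible family of nonnegative integrable random variables. For θ ∈ T_0 set u_1(θ) = ess sup_{τ_1 ∈ T_θ} E[ψ(τ_1, θ) | F_θ], u_2(θ) = ess sup_{τ_2 ∈ T_θ} E[ψ(θ, τ_2) | F_θ], and φ(θ) = max(u_1(θ), u_2(θ)). Then for every S ∈ T_0 and all τ_1, τ_2 ∈ T_S, E[ψ(τ_1, τ_2) | F_S] ≤ E[φ(τ_1 ∧ τ_2) | F_S] almost surely; consequently v(S) := ess sup_{τ_1,τ_2 ∈ T_S} E[ψ(τ_1,τ_2) | F_S] ≤ u(S) := ess sup_{θ ∈ T_S} E[φ(θ) | F_S] a.s. -/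

import Mathlib

/-!
On `{τ₁ ≤ τ₂}`, an event of `F_{τ₁ ∧ τ₂}`, biadmissibility gives `ψ(τ₁, τ₂) = ψ(τ₁ ∧ τ₂, τ₂)`,
whose conditional expectation given `F_{τ₁ ∧ τ₂}` is at most `u₂(τ₁ ∧ τ₂)`; on the complement,
symmetrically, `ψ(τ₁, τ₂) = ψ(τ₁, τ₁ ∧ τ₂)` and the bound is `u₁(τ₁ ∧ τ₂)`. Since `S ≤ τ₁ ∧ τ₂`
only almost surely, `F_S ⊆ F_{τ₁ ∧ τ₂}` needs the null sets to lie in `F_0`; the tower property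
then gives the first claim, and the second follows by passing to essential suprema.
-/

open MeasureTheory Filter Set Topology

variable {Ω : Type*}

/-- `τ` belongs to `T_0`: it is a stopping time of `𝓕` with values in `[0, T]`. -/
def MemT0 {m0 : MeasurableSpace Ω} (𝓕 : MeasureTheory.Filtration ℝ m0) (T : ℝ)
    (τ : Ω → ℝ) : Prop :=
  MeasureTheory.IsStoppingTime 𝓕 (fun ω => (τ ω : WithTop ℝ)) ∧ ∀ ω, τ ω ∈ Set.Icc (0 : ℝ) T

/-- `v` is an essential supremum of the family `f i`, `i` ranging over `{i | P i}`:
it dominates every member a.s. and is a.s. below any other a.s. upper bound. -/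
def IsEssSupFam {m0 : MeasurableSpace Ω} (μ : MeasureTheory.Measure Ω) {ι : Sort*}
    (P : ι → Prop) (f : ι → Ω → ℝ) (v : Ω → ℝ) : Prop :=
  (∀ i, P i → f i ≤ᵐ[μ] v) ∧ ∀ w : Ω → ℝ, (∀ i, P i → f i ≤ᵐ[μ] w) → v ≤ᵐ[μ] w

/-- `v` is an essential infimum of the family `f i`, `i` ranging over `{i | P i}`. -/
def IsEssInfFam {m0 : MeasurableSpace Ω} (μ : MeasureTheory.Measure Ω) {ι : Sort*}
    (P : ι → Prop) (f : ι → Ω → ℝ) (v : Ω → ℝ) : Prop :=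
  (∀ i, P i → v ≤ᵐ[μ] f i) ∧ ∀ w : Ω → ℝ, (∀ i, P i → w ≤ᵐ[μ] f i) → w ≤ᵐ[μ] v

/-- An admissible family of nonnegative random variables indexed by the stopping
times in `T_0`: `φ τ` is a nonnegative `F_τ`-measurable random variable, and
`φ τ = φ τ'` a.s. on `{τ = τ'}`. -/
def Admissible {m0 : MeasurableSpace Ω} (𝓕 : MeasureTheory.Filtration ℝ m0) (T : ℝ)
    (μ : MeasureTheory.Measure Ω) (φ : (Ω → ℝ) → Ω → ℝ) : Prop :=
  (∀ τ (hτ : MemT0 𝓕 T τ),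
      Measurable[hτ.1.measurableSpace] (φ τ) ∧ ∀ ω, 0 ≤ φ τ ω) ∧
  ∀ τ τ', MemT0 𝓕 T τ → MemT0 𝓕 T τ' →
    ∀ᵐ ω ∂μ, τ ω = τ' ω → φ τ ω = φ τ' ω

/-- An a.e. variant of admissibility (for families defined only up to a.s. equality,
such as value-function families): `φ τ` is a.s. nonnegative and a.s. equal to some
`F_τ`-measurable random variable, and `φ τ = φ τ'` a.s. on `{τ = τ'}`. -/
def AdmissibleAE {m0 : MeasurableSpace Ω} (𝓕 : MeasureTheory.Filtration ℝ m0) (T : ℝ)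
    (μ : MeasureTheory.Measure Ω) (φ : (Ω → ℝ) → Ω → ℝ) : Prop :=
  (∀ τ (hτ : MemT0 𝓕 T τ),
      (∀ᵐ ω ∂μ, 0 ≤ φ τ ω) ∧
      ∃ w : Ω → ℝ, Measurable[hτ.1.measurableSpace] w ∧ φ τ =ᵐ[μ] w) ∧
  ∀ τ τ', MemT0 𝓕 T τ → MemT0 𝓕 T τ' →
    ∀ᵐ ω ∂μ, τ ω = τ' ω → φ τ ω = φ τ' ω

/-- A biadmissible family: `ψ τ S` is a nonnegative `F_{τ ∨ S}`-measurable random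
variable, and `ψ τ S = ψ τ' S'` a.s. on `{τ = τ'} ∩ {S = S'}`. -/
def Biadmissible {m0 : MeasurableSpace Ω} (𝓕 : MeasureTheory.Filtration ℝ m0) (T : ℝ)
    (μ : MeasureTheory.Measure Ω) (ψ : (Ω → ℝ) → (Ω → ℝ) → Ω → ℝ) : Prop :=
  (∀ τ S (hτ : MemT0 𝓕 T τ) (hS : MemT0 𝓕 T S),
      Measurable[(hτ.1.max hS.1).measurableSpace] (ψ τ S) ∧ ∀ ω, 0 ≤ ψ τ S ω) ∧
  ∀ τ τ' S S', MemT0 𝓕 T τ → MemT0 𝓕 T τ' → MemT0 𝓕 T S → MemT0 𝓕 T S' →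
    ∀ᵐ ω ∂μ, τ ω = τ' ω → S ω = S' ω → ψ τ S ω = ψ τ' S' ω

/-- `θn ↓ θ` a.s.: the sequence is a.s. nonincreasing and converges a.s. to `θ`. -/
def DownAS {m0 : MeasurableSpace Ω} (μ : MeasureTheory.Measure Ω)
    (θn : ℕ → Ω → ℝ) (θ : Ω → ℝ) : Prop :=
  ∀ᵐ ω ∂μ, (∀ n, θn (n + 1) ω ≤ θn n ω) ∧
    Filter.Tendsto (fun n => θn n ω) Filter.atTop (nhds (θ ω))

/-- `θn ↑ θ` a.s.: the sequence is a.s. nondecreasing and converges a.s. to `θ`. -/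
def UpAS {m0 : MeasurableSpace Ω} (μ : MeasureTheory.Measure Ω)
    (θn : ℕ → Ω → ℝ) (θ : Ω → ℝ) : Prop :=
  ∀ᵐ ω ∂μ, (∀ n, θn n ω ≤ θn (n + 1) ω) ∧
    Filter.Tendsto (fun n => θn n ω) Filter.atTop (nhds (θ ω))

/-- The family `φ` is right continuous along stopping times in expectation. -/
def RCE {m0 : MeasurableSpace Ω} (𝓕 : MeasureTheory.Filtration ℝ m0) (T : ℝ)
    (μ : MeasureTheory.Measure Ω) (φ : (Ω → ℝ) → Ω → ℝ) : Prop :=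
  ∀ θ, MemT0 𝓕 T θ → ∀ θn : ℕ → Ω → ℝ, (∀ n, MemT0 𝓕 T (θn n)) → DownAS μ θn θ →
    Filter.Tendsto (fun n => ∫ ω, φ (θn n) ω ∂μ) Filter.atTop (nhds (∫ ω, φ θ ω ∂μ))

/-- The family `φ` is left continuous along stopping times in expectation. -/
def LCE {m0 : MeasurableSpace Ω} (𝓕 : MeasureTheory.Filtration ℝ m0) (T : ℝ)
    (μ : MeasureTheory.Measure Ω) (φ : (Ω → ℝ) → Ω → ℝ) : Prop :=
  ∀ θ, MemT0 𝓕 T θ → ∀ θn : ℕ → Ω → ℝ, (∀ n, MemT0 𝓕 T (θn n)) → UpAS μ θn θ →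
    Filter.Tendsto (fun n => ∫ ω, φ (θn n) ω ∂μ) Filter.atTop (nhds (∫ ω, φ θ ω ∂μ))

/-- The biadmissible family `ψ` is uniformly right continuous in expectation along
stopping times: for `S_n ↓ S` a.s. (all in `T_0`), the expectation of the essential
supremum over `θ ∈ T_0` of `|ψ(θ, S) - ψ(θ, S_n)|` (resp. `|ψ(S, θ) - ψ(S_n, θ)|`)
tends to `0`. -/
def URCE {m0 : MeasurableSpace Ω} (𝓕 : MeasureTheory.Filtration ℝ m0) (T : ℝ)
    (μ : MeasureTheory.Measure Ω) (ψ : (Ω → ℝ) → (Ω → ℝ) → Ω → ℝ) : Prop :=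
  ∀ S, MemT0 𝓕 T S → ∀ Sn : ℕ → Ω → ℝ, (∀ n, MemT0 𝓕 T (Sn n)) → DownAS μ Sn S →
    (∀ D : ℕ → Ω → ℝ,
      (∀ n, IsEssSupFam μ (MemT0 𝓕 T) (fun θ ω => |ψ θ S ω - ψ θ (Sn n) ω|) (D n)) →
      Filter.Tendsto (fun n => ∫ ω, D n ω ∂μ) Filter.atTop (nhds 0)) ∧
    ∀ D : ℕ → Ω → ℝ,
      (∀ n, IsEssSupFam μ (MemT0 𝓕 T) (fun θ ω => |ψ S θ ω - ψ (Sn n) θ ω|) (D n)) →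
      Filter.Tendsto (fun n => ∫ ω, D n ω ∂μ) Filter.atTop (nhds 0)

/-- The biadmissible family `ψ` is uniformly left continuous in expectation along
stopping times. -/
def ULCE {m0 : MeasurableSpace Ω} (𝓕 : MeasureTheory.Filtration ℝ m0) (T : ℝ)
    (μ : MeasureTheory.Measure Ω) (ψ : (Ω → ℝ) → (Ω → ℝ) → Ω → ℝ) : Prop :=
  ∀ S, MemT0 𝓕 T S → ∀ Sn : ℕ → Ω → ℝ, (∀ n, MemT0 𝓕 T (Sn n)) → UpAS μ Sn S →
    (∀ D : ℕ → Ω → ℝ,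
      (∀ n, IsEssSupFam μ (MemT0 𝓕 T) (fun θ ω => |ψ θ S ω - ψ θ (Sn n) ω|) (D n)) →
      Filter.Tendsto (fun n => ∫ ω, D n ω ∂μ) Filter.atTop (nhds 0)) ∧
    ∀ D : ℕ → Ω → ℝ,
      (∀ n, IsEssSupFam μ (MemT0 𝓕 T) (fun θ ω => |ψ S θ ω - ψ (Sn n) θ ω|) (D n)) →
      Filter.Tendsto (fun n => ∫ ω, D n ω ∂μ) Filter.atTop (nhds 0)

theorem MeasureTheory.IsStoppingTime.measurableSpace_mono_ae {ι : Type*} [LinearOrder ι]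
    {m0 : MeasurableSpace Ω} {μ : Measure Ω} {𝓕 : Filtration ι m0} {i₀ : ι}
    (hnull : ∀ A : Set Ω, μ A = 0 → MeasurableSet[𝓕 i₀] A) {σ τ : Ω → WithTop ι}
    (hσ : IsStoppingTime 𝓕 σ) (hτ : IsStoppingTime 𝓕 τ) (hτ₀ : ∀ ω, (i₀ : WithTop ι) ≤ τ ω)
    (hle : σ ≤ᵐ[μ] τ) :
    hσ.measurableSpace ≤ hτ.measurableSpace := by
  intro s hs
  refine ⟨hs.1, fun i => ?_⟩
  by_cases hi : i₀ ≤ i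
  · have hsplit : s ∩ {ω | τ ω ≤ i} =
        s ∩ {ω | σ ω ≤ i} ∩ {ω | τ ω ≤ i} ∪ s ∩ {ω | τ ω ≤ i} ∩ {ω | ¬ σ ω ≤ τ ω} := by
      ext ω
      simp only [Set.mem_union, Set.mem_inter_iff, Set.mem_ofPred_eq]
      constructor
      · rintro ⟨hωs, hτi⟩
        by_cases hστ : σ ω ≤ τ ω
        exacts [Or.inl ⟨⟨hωs, hστ.trans hτi⟩, hτi⟩, Or.inr ⟨⟨hωs, hτi⟩, hστ⟩]
      · rintro (⟨⟨hωs, -⟩, hτi⟩ | ⟨h, -⟩)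
        exacts [⟨hωs, hτi⟩, h]
    have hnull_i : MeasurableSet[𝓕 i] (s ∩ {ω | τ ω ≤ i} ∩ {ω | ¬ σ ω ≤ τ ω}) :=
      𝓕.mono hi _ (hnull _ (measure_mono_null Set.inter_subset_right (ae_iff.mp hle)))
    rw [hsplit]
    exact ((hs.2 i).inter (hτ i)).union hnull_i
  · convert @MeasurableSet.empty _ (𝓕 i)
    refine Set.eq_empty_of_forall_notMem fun ω ⟨_, hω⟩ => hi ?_
    exact WithTop.coe_le_coe.mp ((hτ₀ ω).trans hω)

theorem MeasureTheory.condExp_ae_eq_on_of_ae_eq_on {α E : Type*} {m m0 : MeasurableSpace α}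
    {μ : Measure α} [NormedAddCommGroup E] [NormedSpace ℝ E] [CompleteSpace E]
    {f g : α → E} {s : Set α} (hs : MeasurableSet[m] s) (hf : Integrable f μ)
    (hg : Integrable g μ) (hfg : ∀ᵐ x ∂μ, x ∈ s → f x = g x) :
    ∀ᵐ x ∂μ, x ∈ s → μ[f | m] x = μ[g | m] x := by
  have hind : s.indicator f =ᵐ[μ] s.indicator g := by
    filter_upwards [hfg] with x hx
    by_cases hxs : x ∈ s
    · simp [hxs, hx hxs]
    · simp [hxs]
  filter_upwards [condExp_indicator hf hs, condExp_indicator hg hs, condExp_congr_ae (m := m) hind]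
    with x hxf hxg hx hxs
  simpa [hxs, hxf, hxg] using hx

theorem IsEssSupFam.ae_le_of_forall_exists {m0 : MeasurableSpace Ω} {μ : Measure Ω}
    {ι κ : Sort*} {P : ι → Prop} {Q : κ → Prop} {f : ι → Ω → ℝ} {g : κ → Ω → ℝ} {v w : Ω → ℝ}
    (hv : IsEssSupFam μ P f v) (hw : IsEssSupFam μ Q g w)
    (h : ∀ i, P i → ∃ j, Q j ∧ f i ≤ᵐ[μ] g j) :
    v ≤ᵐ[μ] w :=
  hv.2 w fun i hi => let ⟨j, hj, hij⟩ := h i hi; hij.trans (hw.1 j hj)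

section
variable {m0 : MeasurableSpace Ω} {μ : Measure Ω} {𝓕 : Filtration ℝ m0} {T : ℝ}
  {τ₁ τ₂ : Ω → ℝ}

theorem MemT0.min (h₁ : MemT0 𝓕 T τ₁) (h₂ : MemT0 𝓕 T τ₂) :
    MemT0 𝓕 T (fun ω => min (τ₁ ω) (τ₂ ω)) :=
  ⟨by simpa only [WithTop.coe_min] using h₁.1.min h₂.1,
    fun ω => ⟨le_min (h₁.2 ω).1 (h₂.2 ω).1, (min_le_left _ _).trans (h₁.2 ω).2⟩⟩

theorem MemT0.measurableSet_le_min (h₁ : MemT0 𝓕 T τ₁) (h₂ : MemT0 𝓕 T τ₂) :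
    MeasurableSet[(h₁.min h₂).1.measurableSpace] {ω | τ₁ ω ≤ τ₂ ω} := by
  have h := h₁.1.measurableSet_stopping_time_le (h₁.min h₂).1
  simpa only [WithTop.coe_le_coe, le_min_iff, le_refl, true_and] using h

variable {ψ : (Ω → ℝ) → (Ω → ℝ) → Ω → ℝ} {u₁ u₂ : (Ω → ℝ) → Ω → ℝ}

theorem Biadmissible.condExp_le_max_of_min (hψ : Biadmissible 𝓕 T μ ψ)
    (hψint : ∀ τ₁ τ₂, MemT0 𝓕 T τ₁ → MemT0 𝓕 T τ₂ → Integrable (ψ τ₁ τ₂) μ)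
    (hu₁ : ∀ θ (hθ : MemT0 𝓕 T θ),
      IsEssSupFam μ (fun τ => MemT0 𝓕 T τ ∧ θ ≤ᵐ[μ] τ)
        (fun τ => μ[ψ τ θ | hθ.1.measurableSpace]) (u₁ θ))
    (hu₂ : ∀ θ (hθ : MemT0 𝓕 T θ),
      IsEssSupFam μ (fun τ => MemT0 𝓕 T τ ∧ θ ≤ᵐ[μ] τ)
        (fun τ => μ[ψ θ τ | hθ.1.measurableSpace]) (u₂ θ))
    (h₁ : MemT0 𝓕 T τ₁) (h₂ : MemT0 𝓕 T τ₂) :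
    μ[ψ τ₁ τ₂ | (h₁.min h₂).1.measurableSpace] ≤ᵐ[μ]
      fun ω => max (u₁ (fun x => min (τ₁ x) (τ₂ x)) ω) (u₂ (fun x => min (τ₁ x) (τ₂ x)) ω) := by
  set θ : Ω → ℝ := fun x => min (τ₁ x) (τ₂ x)
  have hθ : MemT0 𝓕 T θ := h₁.min h₂
  have hA := h₁.measurableSet_le_min h₂
  have on_le := condExp_ae_eq_on_of_ae_eq_on hA (hψint τ₁ τ₂ h₁ h₂) (hψint θ τ₂ hθ h₂) <| by
    filter_upwards [hψ.2 τ₁ θ τ₂ τ₂ h₁ hθ h₂ h₂] with ω hω hle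
    exact hω (min_eq_left hle).symm rfl
  have on_gt := condExp_ae_eq_on_of_ae_eq_on hA.compl (hψint τ₁ τ₂ h₁ h₂) (hψint τ₁ θ h₁ hθ) <| by
    filter_upwards [hψ.2 τ₁ τ₁ τ₂ θ h₁ h₁ h₂ hθ] with ω hω hgt
    exact hω rfl (min_eq_right (le_of_not_ge (show ¬τ₁ ω ≤ τ₂ ω from hgt))).symm
  filter_upwards [on_le, on_gt, (hu₁ θ hθ).1 τ₁ ⟨h₁, ae_of_all _ fun _ => min_le_left _ _⟩,
    (hu₂ θ hθ).1 τ₂ ⟨h₂, ae_of_all _ fun _ => min_le_right _ _⟩] with ω hle hgt hub₁ hub₂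
  by_cases hω : τ₁ ω ≤ τ₂ ω
  · exact (hle hω).trans_le (hub₂.trans (le_max_right _ _))
  · exact (hgt hω).trans_le (hub₁.trans (le_max_left _ _))

theorem Biadmissible.condExp_le_condExp_max_of_min [IsFiniteMeasure μ]
    (hFnull : ∀ A : Set Ω, μ A = 0 → MeasurableSet[𝓕 0] A) (hψ : Biadmissible 𝓕 T μ ψ)
    (hψint : ∀ τ₁ τ₂, MemT0 𝓕 T τ₁ → MemT0 𝓕 T τ₂ → Integrable (ψ τ₁ τ₂) μ)
    (hu₁ : ∀ θ (hθ : MemT0 𝓕 T θ),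
      IsEssSupFam μ (fun τ => MemT0 𝓕 T τ ∧ θ ≤ᵐ[μ] τ)
        (fun τ => μ[ψ τ θ | hθ.1.measurableSpace]) (u₁ θ))
    (hu₂ : ∀ θ (hθ : MemT0 𝓕 T θ),
      IsEssSupFam μ (fun τ => MemT0 𝓕 T τ ∧ θ ≤ᵐ[μ] τ)
        (fun τ => μ[ψ θ τ | hθ.1.measurableSpace]) (u₂ θ))
    (hu₁int : ∀ θ, MemT0 𝓕 T θ → Integrable (u₁ θ) μ)
    (hu₂int : ∀ θ, MemT0 𝓕 T θ → Integrable (u₂ θ) μ)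
    {S : Ω → ℝ} (hS : MemT0 𝓕 T S) (h₁ : MemT0 𝓕 T τ₁) (h₂ : MemT0 𝓕 T τ₂)
    (hS₁ : S ≤ᵐ[μ] τ₁) (hS₂ : S ≤ᵐ[μ] τ₂) :
    μ[ψ τ₁ τ₂ | hS.1.measurableSpace] ≤ᵐ[μ]
      μ[fun ω => max (u₁ (fun x => min (τ₁ x) (τ₂ x)) ω)
          (u₂ (fun x => min (τ₁ x) (τ₂ x)) ω) | hS.1.measurableSpace] := by
  have hθ := h₁.min h₂
  have hSθ : hS.1.measurableSpace ≤ hθ.1.measurableSpace :=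
    hS.1.measurableSpace_mono_ae hFnull hθ.1 (fun ω => WithTop.coe_le_coe.2 (hθ.2 ω).1) <| by
      filter_upwards [hS₁, hS₂] with ω h₁ h₂ using WithTop.coe_le_coe.2 (le_min h₁ h₂)
  calc μ[ψ τ₁ τ₂ | hS.1.measurableSpace]
      =ᵐ[μ] μ[μ[ψ τ₁ τ₂ | hθ.1.measurableSpace] | hS.1.measurableSpace] :=
        (condExp_condExp_of_le hSθ hθ.1.measurableSpace_le).symm
    _ ≤ᵐ[μ] _ := condExp_mono integrable_condExp ((hu₁int _ hθ).sup (hu₂int _ hθ))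
        (hψ.condExp_le_max_of_min hψint hu₁ hu₂ h₁ h₂)

end

theorem reduction_step_one_general
    {m0 : MeasurableSpace Ω} (μ : Measure Ω) [IsProbabilityMeasure μ]
    (𝓕 : Filtration ℝ m0) (T : ℝ)
    (hFnull : ∀ A : Set Ω, μ A = 0 → MeasurableSet[𝓕 0] A)
    (ψ : (Ω → ℝ) → (Ω → ℝ) → Ω → ℝ)
    (hψ : Biadmissible 𝓕 T μ ψ)
    (hψint : ∀ τ₁ τ₂, MemT0 𝓕 T τ₁ → MemT0 𝓕 T τ₂ → Integrable (ψ τ₁ τ₂) μ)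
    (u₁ u₂ : (Ω → ℝ) → Ω → ℝ)
    (hu₁ : ∀ θ (hθ : MemT0 𝓕 T θ),
      IsEssSupFam μ (fun τ => MemT0 𝓕 T τ ∧ θ ≤ᵐ[μ] τ)
        (fun τ => μ[ψ τ θ | hθ.1.measurableSpace]) (u₁ θ))
    (hu₂ : ∀ θ (hθ : MemT0 𝓕 T θ),
      IsEssSupFam μ (fun τ => MemT0 𝓕 T τ ∧ θ ≤ᵐ[μ] τ)
        (fun τ => μ[ψ θ τ | hθ.1.measurableSpace]) (u₂ θ))
    (hu₁int : ∀ θ, MemT0 𝓕 T θ → Integrable (u₁ θ) μ)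
    (hu₂int : ∀ θ, MemT0 𝓕 T θ → Integrable (u₂ θ) μ) :
    ∀ S (hS : MemT0 𝓕 T S),
      (∀ τ₁ τ₂, MemT0 𝓕 T τ₁ → MemT0 𝓕 T τ₂ → S ≤ᵐ[μ] τ₁ → S ≤ᵐ[μ] τ₂ →
        μ[ψ τ₁ τ₂ | hS.1.measurableSpace] ≤ᵐ[μ]
          μ[fun ω => max (u₁ (fun x => min (τ₁ x) (τ₂ x)) ω)
              (u₂ (fun x => min (τ₁ x) (τ₂ x)) ω) | hS.1.measurableSpace]) ∧
      ∀ vS uS : Ω → ℝ,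
        IsEssSupFam μ
          (fun p : (Ω → ℝ) × (Ω → ℝ) =>
            MemT0 𝓕 T p.1 ∧ MemT0 𝓕 T p.2 ∧ S ≤ᵐ[μ] p.1 ∧ S ≤ᵐ[μ] p.2)
          (fun p => μ[ψ p.1 p.2 | hS.1.measurableSpace]) vS →
        IsEssSupFam μ (fun θ => MemT0 𝓕 T θ ∧ S ≤ᵐ[μ] θ)
          (fun θ => μ[fun ω => max (u₁ θ ω) (u₂ θ ω) | hS.1.measurableSpace]) uS →
        vS ≤ᵐ[μ] uS := by
  intro S hS
  have step := fun τ₁ τ₂ (h₁ : MemT0 𝓕 T τ₁) (h₂ : MemT0 𝓕 T τ₂) =>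
    hψ.condExp_le_condExp_max_of_min hFnull hψint hu₁ hu₂ hu₁int hu₂int hS h₁ h₂
  refine ⟨step, fun vS uS hvS huS => hvS.ae_le_of_forall_exists huS ?_⟩
  rintro ⟨τ₁, τ₂⟩ ⟨h₁, h₂, hS₁, hS₂⟩
  refine ⟨_, ⟨h₁.min h₂, ?_⟩, step τ₁ τ₂ h₁ h₂ hS₁ hS₂⟩
  filter_upwards [hS₁, hS₂] with ω h₁ h₂ using le_min h₁ h₂

/-- (Step 1 of the reduction theorem) With
`u₁(θ) = ess sup_{τ₁ ∈ T_θ} E[ψ(τ₁, θ) | F_θ]`, `u₂(θ) = ess sup_{τ₂ ∈ T_θ} E[ψ(θ, τ₂) | F_θ]`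
and `φ(θ) = max(u₁(θ), u₂(θ))`, one has for all `τ₁, τ₂ ∈ T_S` that
`E[ψ(τ₁,τ₂) | F_S] ≤ E[φ(τ₁ ∧ τ₂) | F_S]` a.s.; consequently
`v(S) = ess sup_{τ₁,τ₂ ∈ T_S} E[ψ(τ₁,τ₂) | F_S] ≤ u(S) = ess sup_{θ ∈ T_S} E[φ(θ) | F_S]` a.s. -/
theorem reduction_step_one
    {m0 : MeasurableSpace Ω} (μ : Measure Ω) [IsProbabilityMeasure μ]
    (𝓕 : Filtration ℝ m0) (T : ℝ) (hT : 0 ≤ T)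
    (hFright : ∀ t : ℝ, 𝓕 t = ⨅ s ∈ Set.Ioi t, 𝓕 s)
    (hFnull : ∀ A : Set Ω, μ A = 0 → MeasurableSet[𝓕 0] A)
    (ψ : (Ω → ℝ) → (Ω → ℝ) → Ω → ℝ)
    (hψ : Biadmissible 𝓕 T μ ψ)
    (hψint : ∀ τ₁ τ₂, MemT0 𝓕 T τ₁ → MemT0 𝓕 T τ₂ → Integrable (ψ τ₁ τ₂) μ)
    (u₁ u₂ : (Ω → ℝ) → Ω → ℝ)
    (hu₁ : ∀ θ (hθ : MemT0 𝓕 T θ),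
      IsEssSupFam μ (fun τ => MemT0 𝓕 T τ ∧ θ ≤ᵐ[μ] τ)
        (fun τ => μ[ψ τ θ | hθ.1.measurableSpace]) (u₁ θ))
    (hu₂ : ∀ θ (hθ : MemT0 𝓕 T θ),
      IsEssSupFam μ (fun τ => MemT0 𝓕 T τ ∧ θ ≤ᵐ[μ] τ)
        (fun τ => μ[ψ θ τ | hθ.1.measurableSpace]) (u₂ θ))
    (hu₁int : ∀ θ, MemT0 𝓕 T θ → Integrable (u₁ θ) μ)
    (hu₂int : ∀ θ, MemT0 𝓕 T θ → Integrable (u₂ θ) μ) :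
    ∀ S (hS : MemT0 𝓕 T S),
      (∀ τ₁ τ₂, MemT0 𝓕 T τ₁ → MemT0 𝓕 T τ₂ → S ≤ᵐ[μ] τ₁ → S ≤ᵐ[μ] τ₂ →
        μ[ψ τ₁ τ₂ | hS.1.measurableSpace] ≤ᵐ[μ]
          μ[fun ω => max (u₁ (fun x => min (τ₁ x) (τ₂ x)) ω)
              (u₂ (fun x => min (τ₁ x) (τ₂ x)) ω) | hS.1.measurableSpace]) ∧
      ∀ vS uS : Ω → ℝ,
        IsEssSupFam μ
          (fun p : (Ω → ℝ) × (Ω → ℝ) =>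
            MemT0 𝓕 T p.1 ∧ MemT0 𝓕 T p.2 ∧ S ≤ᵐ[μ] p.1 ∧ S ≤ᵐ[μ] p.2)
          (fun p => μ[ψ p.1 p.2 | hS.1.measurableSpace]) vS →
        IsEssSupFam μ (fun θ => MemT0 𝓕 T θ ∧ S ≤ᵐ[μ] θ)
          (fun θ => μ[fun ω => max (u₁ θ ω) (u₂ θ ω) | hS.1.measurableSpace]) uS →
        vS ≤ᵐ[μ] uS :=
  reduction_step_one_general μ 𝓕 T hFnull ψ hψ hψint u₁ u₂ hu₁ hu₂ hu₁int hu₂int
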